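/- arXiv:1304.7536 — 4 statements merged into one kernel-verified Lean document; each statement's English description precedes it below -/
import Mathlib

section
/- Let p > 1, β > 0, c_max ≥ 0 and χ₁ ≥ 0 be real numbers, and let χ : ℝ → ℝ be a function satisfying 0 ≤ χ(c) ≤ χ₁ for all c ∈ [0, c_max]. Define φ(c) = exp(β²c²). If (p−1)χ₁² ≤ β²/(3p), c_max·χ₁ ≤ 1/(6p), and (8/(p−1))·β²·c_max² ≤ 1/(6p), then for every c ∈ [0, c_max] one has (4/(p−1))·(φ′(c))²/φ(c) + (p−1)·χ(c)²·φ(c) + χ(c)·φ′(c) ≤ (1/(2p))·φ″(c). -/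
/-!
After dividing by `φ(c) > 0` the inequality no longer involves the exponential:
`16β⁴c²/(p-1) + (p-1)χ² + 2β²cχ ≤ (β² + 2β⁴c²)/p`. Each of the three terms on the left is
at most `β²/(3p)`, by `h3`, `h1` and `h2` respectively, so the left side is at most `β²/p`,
and the right side is at least that.
-/

lemma two_mul_sq_mul_le_div {β q p : ℝ} (h : q ≤ 1 / (6 * p)) :
    2 * β ^ 2 * q ≤ β ^ 2 / (3 * p) := by
  calc 2 * β ^ 2 * q ≤ 2 * β ^ 2 * (1 / (6 * p)) := by gcongr
    _ = β ^ 2 / (3 * p) := by ring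

lemma weight_inequality_div_exp {p β cmax χ₁ c x : ℝ} (hp : 1 < p)
    (hc0 : 0 ≤ c) (hcm : c ≤ cmax) (hx0 : 0 ≤ x) (hx1 : x ≤ χ₁)
    (h1 : (p - 1) * χ₁ ^ 2 ≤ β ^ 2 / (3 * p))
    (h2 : cmax * χ₁ ≤ 1 / (6 * p))
    (h3 : 8 / (p - 1) * β ^ 2 * cmax ^ 2 ≤ 1 / (6 * p)) :
    16 / (p - 1) * β ^ 4 * c ^ 2 + (p - 1) * x ^ 2 + x * (2 * β ^ 2 * c)
      ≤ 1 / (2 * p) * (2 * β ^ 2 + 4 * β ^ 4 * c ^ 2) := by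
  have hp1 : 0 < p - 1 := by linarith
  have diffusion : 16 / (p - 1) * β ^ 4 * c ^ 2 ≤ β ^ 2 / (3 * p) := by
    have h : 8 / (p - 1) * β ^ 2 * c ^ 2 ≤ 1 / (6 * p) := h3.trans' (by gcongr)
    calc 16 / (p - 1) * β ^ 4 * c ^ 2 = 2 * β ^ 2 * (8 / (p - 1) * β ^ 2 * c ^ 2) := by ring
      _ ≤ β ^ 2 / (3 * p) := two_mul_sq_mul_le_div h
  have chemotaxis : (p - 1) * x ^ 2 ≤ β ^ 2 / (3 * p) := h1.trans' (by gcongr)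
  have cross : x * (2 * β ^ 2 * c) ≤ β ^ 2 / (3 * p) := by
    have h : c * x ≤ 1 / (6 * p) := h2.trans' (mul_le_mul hcm hx1 hx0 (hc0.trans hcm))
    calc x * (2 * β ^ 2 * c) = 2 * β ^ 2 * (c * x) := by ring
      _ ≤ β ^ 2 / (3 * p) := two_mul_sq_mul_le_div h
  have rhs : β ^ 2 / p ≤ 1 / (2 * p) * (2 * β ^ 2 + 4 * β ^ 4 * c ^ 2) := by
    rw [mul_add, show 1 / (2 * p) * (2 * β ^ 2) = β ^ 2 / p by field_simp]
    have : 0 < p := by linarith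
    exact le_add_of_nonneg_right (by positivity)
  have : β ^ 2 / (3 * p) + β ^ 2 / (3 * p) + β ^ 2 / (3 * p) = β ^ 2 / p := by ring
  linarith

theorem weight_differential_inequality_general
    (p β cmax χ₁ : ℝ) (hp : 1 < p)
    (χ : ℝ → ℝ) (hχ : ∀ c ∈ Set.Icc (0:ℝ) cmax, 0 ≤ χ c ∧ χ c ≤ χ₁)
    (h1 : (p - 1) * χ₁ ^ 2 ≤ β ^ 2 / (3 * p))
    (h2 : cmax * χ₁ ≤ 1 / (6 * p))
    (h3 : 8 / (p - 1) * β ^ 2 * cmax ^ 2 ≤ 1 / (6 * p)) :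
    ∀ c ∈ Set.Icc (0:ℝ) cmax,
      4 / (p - 1) * (2 * β ^ 2 * c * Real.exp (β ^ 2 * c ^ 2)) ^ 2 / Real.exp (β ^ 2 * c ^ 2)
        + (p - 1) * χ c ^ 2 * Real.exp (β ^ 2 * c ^ 2)
        + χ c * (2 * β ^ 2 * c * Real.exp (β ^ 2 * c ^ 2))
        ≤ 1 / (2 * p) * ((2 * β ^ 2 + 4 * β ^ 4 * c ^ 2) * Real.exp (β ^ 2 * c ^ 2)) := by
  intro c hc
  obtain ⟨hχ0, hχ1⟩ := hχ c hc
  have core := weight_inequality_div_exp hp hc.1 hc.2 hχ0 hχ1 h1 h2 h3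
  have hdiv : 4 / (p - 1) * (2 * β ^ 2 * c * Real.exp (β ^ 2 * c ^ 2)) ^ 2
      / Real.exp (β ^ 2 * c ^ 2)
      = 16 / (p - 1) * β ^ 4 * c ^ 2 * Real.exp (β ^ 2 * c ^ 2) := by
    field_simp
    ring
  rw [hdiv]
  linear_combination Real.exp (β ^ 2 * c ^ 2) * core

/-- The key differential inequality for the weight function `φ(c) = exp(β²c²)`
used in the weighted `L^p` estimate of the cell density. -/
theorem weight_differential_inequality
    (p β cmax χ₁ : ℝ) (hp : 1 < p) (hβ : 0 < β) (hcmax : 0 ≤ cmax) (hχ₁ : 0 ≤ χ₁)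
    (χ : ℝ → ℝ) (hχ : ∀ c ∈ Set.Icc (0:ℝ) cmax, 0 ≤ χ c ∧ χ c ≤ χ₁)
    (h1 : (p - 1) * χ₁ ^ 2 ≤ β ^ 2 / (3 * p))
    (h2 : cmax * χ₁ ≤ 1 / (6 * p))
    (h3 : 8 / (p - 1) * β ^ 2 * cmax ^ 2 ≤ 1 / (6 * p)) :
    ∀ c ∈ Set.Icc (0:ℝ) cmax,
      4 / (p - 1) * (2 * β ^ 2 * c * Real.exp (β ^ 2 * c ^ 2)) ^ 2 / Real.exp (β ^ 2 * c ^ 2)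
        + (p - 1) * χ c ^ 2 * Real.exp (β ^ 2 * c ^ 2)
        + χ c * (2 * β ^ 2 * c * Real.exp (β ^ 2 * c ^ 2))
        ≤ 1 / (2 * p) * ((2 * β ^ 2 + 4 * β ^ 4 * c ^ 2) * Real.exp (β ^ 2 * c ^ 2)) :=
  weight_differential_inequality_general p β cmax χ₁ hp χ hχ h1 h2 h3
end

section
/- Let 0 ≤ a < 1, 0 < b < 1, C > 0 and ξ₀ > 0 be real numbers, and let U : [ξ₀, ∞) → ℝ be a differentiable, nonincreasing, nonnegative function satisfying U′(ξ) ≤ −C·ξ^{−a}·U(ξ)^{b} for all ξ ≥ ξ₀. Then U(ξ) = 0 for all ξ ≥ M, where M = ( ξ₀^{1−a} + ((1−a)/((1−b)·C))·U(ξ₀)^{1−b} )^{1/(1−a)}. -/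
/-!
While `U > 0`, the energy `U ξ ^ (1 - b) + (1 - b) C / (1 - a) · ξ ^ (1 - a)` is nonincreasing:
by the differential inequality its derivative is `(1 - b) (U ^ (-b) U' + C ξ ^ (-a)) ≤ 0`.
The level `M` is chosen so that the energy at `M` with `U = 0` equals the energy at `ξ₀`;
hence if `U M > 0`, comparing energies gives `U M ^ (1 - b) ≤ 0`, which is absurd.
-/

open Set

noncomputable def odeEnergy (a b C : ℝ) (U : ℝ → ℝ) (ξ : ℝ) : ℝ :=
  U ξ ^ (1 - b) + (1 - b) * C / (1 - a) * ξ ^ (1 - a)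

variable {a b C x U' : ℝ} {U : ℝ → ℝ}

lemma hasDerivAt_odeEnergy (ha : a ≠ 1) (hx : x ≠ 0) (hUx : U x ≠ 0) (hU : HasDerivAt U U' x) :
    HasDerivAt (odeEnergy a b C U) ((1 - b) * (U x ^ (-b) * U' + C * x ^ (-a))) x := by
  have h1a : 1 - a ≠ 0 := sub_ne_zero.mpr ha.symm
  refine ((hU.rpow_const (p := 1 - b) (Or.inl hUx)).add
    ((Real.hasDerivAt_rpow_const (p := 1 - a) (Or.inl hx)).const_mul
      ((1 - b) * C / (1 - a)))).congr_deriv ?_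
  rw [show 1 - b - 1 = -b by ring, show 1 - a - 1 = -a by ring]
  field_simp

lemma odeEnergy_deriv_nonpos (hb : b ≤ 1) (hUx : 0 < U x)
    (hineq : U' ≤ -C * x ^ (-a) * U x ^ b) :
    (1 - b) * (U x ^ (-b) * U' + C * x ^ (-a)) ≤ 0 := by
  have hcancel : U x ^ (-b) * U x ^ b = 1 := by
    rw [← Real.rpow_add hUx, neg_add_cancel, Real.rpow_zero]
  have : U x ^ (-b) * U' ≤ -(C * x ^ (-a)) :=
    calc U x ^ (-b) * U' ≤ U x ^ (-b) * (-C * x ^ (-a) * U x ^ b) :=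
          mul_le_mul_of_nonneg_left hineq (Real.rpow_nonneg hUx.le _)
      _ = -(C * x ^ (-a)) := by linear_combination (-C * x ^ (-a)) * hcancel
  exact mul_nonpos_of_nonneg_of_nonpos (by linarith) (by linarith)

lemma antitoneOn_odeEnergy {D : Set ℝ} (hD : Convex ℝ D) (hD0 : D ⊆ Ioi 0) (ha : a ≠ 1)
    (hb : b ≤ 1) (hdiff : ∀ ξ ∈ D, DifferentiableAt ℝ U ξ) (hpos : ∀ ξ ∈ D, 0 < U ξ)
    (hineq : ∀ ξ ∈ D, deriv U ξ ≤ -C * ξ ^ (-a) * U ξ ^ b) :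
    AntitoneOn (odeEnergy a b C U) D := by
  have hderiv : ∀ ξ ∈ D, HasDerivAt (odeEnergy a b C U)
      ((1 - b) * (U ξ ^ (-b) * deriv U ξ + C * ξ ^ (-a))) ξ := fun ξ hξ =>
    hasDerivAt_odeEnergy ha (hD0 hξ).ne' (hpos ξ hξ).ne' (hdiff ξ hξ).hasDerivAt
  refine antitoneOn_of_hasDerivWithinAt_nonpos hD
    (fun ξ hξ => (hderiv ξ hξ).continuousAt.continuousWithinAt)
    (fun ξ hξ => (hderiv ξ (interior_subset hξ)).hasDerivWithinAt) fun ξ hξ => ?_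
  have hξ := interior_subset hξ
  exact odeEnergy_deriv_nonpos hb (hpos ξ hξ) (hineq ξ hξ)

lemma eq_zero_of_odeEnergy_le {s t : ℝ} (hs : 0 < s) (hst : s ≤ t) (ha : a ≠ 1) (hb : b ≤ 1)
    (hdiff : ∀ ξ ∈ Icc s t, DifferentiableAt ℝ U ξ) (hmono : AntitoneOn U (Icc s t))
    (hUt₀ : 0 ≤ U t) (hineq : ∀ ξ ∈ Icc s t, deriv U ξ ≤ -C * ξ ^ (-a) * U ξ ^ b)
    (hlevel : odeEnergy a b C U s ≤ (1 - b) * C / (1 - a) * t ^ (1 - a)) :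
    U t = 0 := by
  by_contra hne
  have hUt : 0 < U t := hUt₀.lt_of_ne' hne
  have hpos : ∀ ξ ∈ Icc s t, 0 < U ξ := fun ξ hξ =>
    hUt.trans_le (hmono hξ (right_mem_Icc.mpr hst) hξ.2)
  have henergy := antitoneOn_odeEnergy (convex_Icc s t) (fun ξ hξ => hs.trans_le hξ.1) ha hb
    hdiff hpos hineq (left_mem_Icc.mpr hst) (right_mem_Icc.mpr hst) hst
  have := Real.rpow_pos_of_pos hUt (1 - b)
  unfold odeEnergy at henergy hlevel
  linarith

theorem deGiorgi_ode_lemma_general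
    (a b C ξ₀ : ℝ) (ha1 : a < 1) (hb1 : b < 1)
    (hC : 0 < C) (hξ₀ : 0 < ξ₀) (U : ℝ → ℝ)
    (hdiff : ∀ ξ ∈ Set.Ici ξ₀, DifferentiableAt ℝ U ξ)
    (hmono : AntitoneOn U (Set.Ici ξ₀))
    (hnonneg : ∀ ξ ∈ Set.Ici ξ₀, 0 ≤ U ξ)
    (hineq : ∀ ξ ∈ Set.Ici ξ₀, deriv U ξ ≤ -C * ξ ^ (-a) * U ξ ^ b) :
    ∀ ξ ≥ (ξ₀ ^ (1 - a) + (1 - a) / ((1 - b) * C) * U ξ₀ ^ (1 - b)) ^ (1 / (1 - a)),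
      U ξ = 0 := by
  have h1a : 0 < 1 - a := by linarith
  have h1b : 0 < 1 - b := by linarith
  set X := ξ₀ ^ (1 - a) + (1 - a) / ((1 - b) * C) * U ξ₀ ^ (1 - b) with hXdef
  set M := X ^ (1 / (1 - a)) with hMdef
  have hX : ξ₀ ^ (1 - a) ≤ X :=
    le_add_of_nonneg_right <|
      mul_nonneg (by positivity) (Real.rpow_nonneg (hnonneg ξ₀ self_mem_Ici) _)
  have hX0 : 0 ≤ X := (Real.rpow_nonneg hξ₀.le _).trans hX
  have hMX : M ^ (1 - a) = X := by
    rw [hMdef, one_div, Real.rpow_inv_rpow hX0 h1a.ne']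
  have hξ₀M : ξ₀ ≤ M := by
    rwa [← Real.rpow_le_rpow_iff hξ₀.le (Real.rpow_nonneg hX0 _) h1a, hMX]
  have hUM : U M = 0 := by
    refine eq_zero_of_odeEnergy_le hξ₀ hξ₀M ha1.ne hb1.le (fun ξ hξ => hdiff ξ hξ.1)
      (hmono.mono Icc_subset_Ici_self) (hnonneg M hξ₀M) (fun ξ hξ => hineq ξ hξ.1) ?_
    rw [odeEnergy, hMX, hXdef]
    field_simp
    linarith
  intro ξ hξ
  have hξ₀ξ : ξ ∈ Ici ξ₀ := hξ₀M.trans hξ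
  exact le_antisymm (hUM ▸ hmono (mem_Ici.mpr hξ₀M) hξ₀ξ hξ) (hnonneg ξ hξ₀ξ)

/-- De Giorgi-type ODE lemma: a nonnegative nonincreasing differentiable function
satisfying `U′(ξ) ≤ −C ξ^{−a} U(ξ)^b` with `0 ≤ a < 1`, `0 < b < 1` vanishes beyond
the explicit level `M`. -/
theorem deGiorgi_ode_lemma
    (a b C ξ₀ : ℝ) (ha0 : 0 ≤ a) (ha1 : a < 1) (hb0 : 0 < b) (hb1 : b < 1)
    (hC : 0 < C) (hξ₀ : 0 < ξ₀) (U : ℝ → ℝ)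
    (hdiff : ∀ ξ ∈ Set.Ici ξ₀, DifferentiableAt ℝ U ξ)
    (hmono : AntitoneOn U (Set.Ici ξ₀))
    (hnonneg : ∀ ξ ∈ Set.Ici ξ₀, 0 ≤ U ξ)
    (hineq : ∀ ξ ∈ Set.Ici ξ₀, deriv U ξ ≤ -C * ξ ^ (-a) * U ξ ^ b) :
    ∀ ξ ≥ (ξ₀ ^ (1 - a) + (1 - a) / ((1 - b) * C) * U ξ₀ ^ (1 - b)) ^ (1 / (1 - a)),
      U ξ = 0 :=
  deGiorgi_ode_lemma_general a b C ξ₀ ha1 hb1 hC hξ₀ U hdiff hmono hnonneg hineq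
end

section
/- Let d ≥ 1 be an integer, set q = 2(d+2)/d and α = 4/(d+4). Let T > 0, let ν : [0,T] → [0, ∞) be measurable and let g : [0,T] × ℝ^d → [0, ∞) be measurable. Then ∫₀^T ν(t)·‖g(t,·)‖²_{L²(ℝ^d)} dt ≤ ( ∫₀^T ν(t)^{1/α} · ‖g(t,·)‖_{L¹(ℝ^d)} dt )^{α} · ( ∫₀^T ‖g(t,·)‖_{L^q(ℝ^d)}^{q} dt )^{d/(d+4)}, where all quantities take values in [0, ∞]. -/
/-!
Since `2 = α · 1 + (1 - α) · q` with `1 - α = d/(d+4)`, Hölder's inequality in space with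
exponents `1/α` and `1/(1-α)` gives `‖g(t)‖₂² ≤ ‖g(t)‖₁^α (‖g(t)‖_q^q)^(1-α)` (log-convexity of
`p ↦ ‖g‖_p^p`). Writing `ν = (ν^{1/α})^α` attaches the weight to the `L¹` factor, and Hölder's
inequality in time with the same pair of exponents finishes the proof.
-/

open MeasureTheory

section Interpolation

variable {Ω ε : Type*} [MeasurableSpace Ω] {μ : Measure Ω} [TopologicalSpace ε] [ContinuousENorm ε]

theorem ENNReal.lintegral_rpow_convex_combination_le {F : Ω → ENNReal} (hF : AEMeasurable F μ)
    {a b r s : ℝ} (ha : 0 ≤ a) (hb : 0 ≤ b) (hab : a + b = 1) (hr : 0 ≤ r) (hs : 0 ≤ s) :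
    ∫⁻ x, F x ^ (a * r + b * s) ∂μ ≤ (∫⁻ x, F x ^ r ∂μ) ^ a * (∫⁻ x, F x ^ s ∂μ) ^ b := by
  have hsplit : ∀ x, F x ^ (a * r + b * s) = (F x ^ r) ^ a * (F x ^ s) ^ b := fun x => by
    rw [← ENNReal.rpow_mul, ← ENNReal.rpow_mul, ← ENNReal.rpow_add_of_nonneg _ _
      (mul_nonneg hr ha) (mul_nonneg hs hb), mul_comm r, mul_comm s]
  simp_rw [hsplit]
  exact ENNReal.lintegral_mul_norm_pow_le (hF.pow_const r) (hF.pow_const s) ha hb hab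

theorem eLpNorm_ofReal_rpow_eq_lintegral (f : Ω → ε) {p : ℝ} (hp : 0 < p) :
    eLpNorm f (ENNReal.ofReal p) μ ^ p = ∫⁻ x, ‖f x‖ₑ ^ p ∂μ := by
  have h := eLpNorm_nnreal_pow_eq_lintegral (μ := μ) (f := f) (p := p.toNNReal)
    (by simpa using hp)
  rwa [Real.coe_toNNReal _ hp.le] at h

theorem eLpNorm_rpow_le_interpolate {f : Ω → ε} (hf : AEStronglyMeasurable f μ)
    {a b r s : ℝ} (ha : 0 ≤ a) (hb : 0 ≤ b) (hab : a + b = 1) (hr : 0 < r) (hs : 0 < s) :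
    eLpNorm f (ENNReal.ofReal (a * r + b * s)) μ ^ (a * r + b * s) ≤
      (eLpNorm f (ENNReal.ofReal r) μ ^ r) ^ a * (eLpNorm f (ENNReal.ofReal s) μ ^ s) ^ b := by
  have hp : 0 < a * r + b * s := by
    rcases ha.eq_or_lt with rfl | ha'
    · rw [zero_add] at hab; simp [hab, hs]
    · positivity
  simp only [eLpNorm_ofReal_rpow_eq_lintegral f hp, eLpNorm_ofReal_rpow_eq_lintegral f hr,
    eLpNorm_ofReal_rpow_eq_lintegral f hs]
  exact ENNReal.lintegral_rpow_convex_combination_le hf.enorm ha hb hab hr.le hs.le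

theorem Measurable.eLpNorm_rpow_of_uncurry {β : Type*} [MeasurableSpace β] [SFinite μ]
    [MeasurableSpace ε] [OpensMeasurableSpace ε] {g : β → Ω → ε}
    (hg : Measurable (Function.uncurry g)) {p : ℝ} (hp : 0 < p) :
    Measurable fun t => eLpNorm (g t) (ENNReal.ofReal p) μ ^ p := by
  simp_rw [eLpNorm_ofReal_rpow_eq_lintegral _ hp]
  exact (hg.enorm.pow_const p).lintegral_prod_right

end Interpolation

theorem ENNReal.ofReal_mul_le_rpow_mul {w a : ℝ} (hw : 0 ≤ w) (ha : 0 < a) {X Y Z : ENNReal}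
    (h : X ≤ Y ^ a * Z) : ENNReal.ofReal w * X ≤ (ENNReal.ofReal (w ^ a⁻¹) * Y) ^ a * Z := by
  rw [ENNReal.mul_rpow_of_nonneg _ _ ha.le, ENNReal.ofReal_rpow_of_nonneg (by positivity) ha.le,
    ← Real.rpow_mul hw, inv_mul_cancel₀ ha.ne', Real.rpow_one, mul_assoc]
  gcongr

theorem weighted_spacetime_interpolation_general
    (d : ℕ) (hd : 1 ≤ d) (T : ℝ)
    (ν : ℝ → ℝ) (hν : Measurable ν) (hνpos : ∀ t, 0 ≤ ν t)
    (g : ℝ → EuclideanSpace ℝ (Fin d) → ℝ)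
    (hg : Measurable (Function.uncurry g)) :
    ∫⁻ t in Set.Icc (0:ℝ) T, ENNReal.ofReal (ν t) * eLpNorm (g t) 2 volume ^ (2:ℝ) ≤
      (∫⁻ t in Set.Icc (0:ℝ) T,
          ENNReal.ofReal (ν t ^ (((d:ℝ) + 4) / 4)) * eLpNorm (g t) 1 volume) ^
            ((4:ℝ) / ((d:ℝ) + 4)) *
        (∫⁻ t in Set.Icc (0:ℝ) T,
            eLpNorm (g t) (ENNReal.ofReal (2 * ((d:ℝ) + 2) / d)) volume ^
              (2 * ((d:ℝ) + 2) / d)) ^ ((d:ℝ) / ((d:ℝ) + 4)) := by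
  have hd0 : (0:ℝ) < d := by exact_mod_cast hd
  set q : ℝ := 2 * ((d:ℝ) + 2) / d with hq_def
  set a : ℝ := 4 / ((d:ℝ) + 4) with ha_def
  set b : ℝ := (d:ℝ) / ((d:ℝ) + 4) with hb_def
  have hq : 0 < q := by positivity
  have ha : 0 < a := by positivity
  have hb : 0 ≤ b := by positivity
  have hab : a + b = 1 := by rw [ha_def, hb_def]; field_simp; ring
  have hexp : a * 1 + b * q = 2 := by rw [ha_def, hb_def, hq_def]; field_simp; ring
  have hweight : ((d:ℝ) + 4) / 4 = a⁻¹ := (inv_div _ _).symm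
  have hspace : ∀ t, ENNReal.ofReal (ν t) * eLpNorm (g t) 2 volume ^ (2:ℝ) ≤
      (ENNReal.ofReal (ν t ^ (((d:ℝ) + 4) / 4)) * eLpNorm (g t) 1 volume) ^ a *
        (eLpNorm (g t) (ENNReal.ofReal q) volume ^ q) ^ b := fun t => by
    have h := eLpNorm_rpow_le_interpolate (μ := volume)
      (hg.of_uncurry_left (x := t)).aestronglyMeasurable ha.le hb hab one_pos hq
    rw [hexp, ENNReal.ofReal_ofNat, ENNReal.ofReal_one, ENNReal.rpow_one] at h
    rw [hweight]
    exact ENNReal.ofReal_mul_le_rpow_mul (hνpos t) ha h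
  have hL1 : Measurable fun t =>
      ENNReal.ofReal (ν t ^ (((d:ℝ) + 4) / 4)) * eLpNorm (g t) 1 volume := by
    have h := hg.eLpNorm_rpow_of_uncurry (μ := volume) one_pos
    simp only [ENNReal.ofReal_one, ENNReal.rpow_one] at h
    exact (hν.pow_const _).ennreal_ofReal.mul h
  calc _ ≤ ∫⁻ t in Set.Icc (0:ℝ) T,
          (ENNReal.ofReal (ν t ^ (((d:ℝ) + 4) / 4)) * eLpNorm (g t) 1 volume) ^ a *
            (eLpNorm (g t) (ENNReal.ofReal q) volume ^ q) ^ b := lintegral_mono hspace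
    _ ≤ _ := ENNReal.lintegral_mul_norm_pow_le hL1.aemeasurable
        (hg.eLpNorm_rpow_of_uncurry hq).aemeasurable ha.le hb hab

/-- Weighted space-time interpolation (inequality (3.15) of the paper):
with `q = 2(d+2)/d` and `α = 4/(d+4)`,
`∫₀^T ν ‖g‖²_{L²} ≤ (∫₀^T ν^{1/α} ‖g‖_{L¹})^α (∫₀^T ‖g‖_{L^q}^q)^{d/(d+4)}`. -/
theorem weighted_spacetime_interpolation
    (d : ℕ) (hd : 1 ≤ d) (T : ℝ) (hT : 0 < T)
    (ν : ℝ → ℝ) (hν : Measurable ν) (hνpos : ∀ t, 0 ≤ ν t)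
    (g : ℝ → EuclideanSpace ℝ (Fin d) → ℝ)
    (hg : Measurable (Function.uncurry g)) (hgpos : ∀ t x, 0 ≤ g t x) :
    ∫⁻ t in Set.Icc (0:ℝ) T, ENNReal.ofReal (ν t) * eLpNorm (g t) 2 volume ^ (2:ℝ) ≤
      (∫⁻ t in Set.Icc (0:ℝ) T,
          ENNReal.ofReal (ν t ^ (((d:ℝ) + 4) / 4)) * eLpNorm (g t) 1 volume) ^
            ((4:ℝ) / ((d:ℝ) + 4)) *
        (∫⁻ t in Set.Icc (0:ℝ) T,
            eLpNorm (g t) (ENNReal.ofReal (2 * ((d:ℝ) + 2) / d)) volume ^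
              (2 * ((d:ℝ) + 2) / d)) ^ ((d:ℝ) / ((d:ℝ) + 4)) :=
  weighted_spacetime_interpolation_general d hd T ν hν hνpos g hg
end

section
/- Let d ≥ 1 be an integer. Let n, c : ℝ^d → ℝ be smooth functions, let u : ℝ^d → ℝ^d be a smooth vector field with div u = 0 on ℝ^d, let χ : ℝ → ℝ be smooth, and let φ : ℝ → ℝ be a smooth function with φ(s) > 0 for all s and φ′(s) = φ(s)·χ(s) for all s. Then at every point of ℝ^d one has div( φ(c)·∇(n/φ(c)) − (n/φ(c))·φ(c)·u ) = Δn − div( n·χ(c)·∇c ) − u·∇n. -/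
open MeasureTheory RealInnerProductSpace

/-- Divergence of a vector field on `ℝ^d`. -/
noncomputable def vecDiv {d : ℕ} (u : EuclideanSpace ℝ (Fin d) → EuclideanSpace ℝ (Fin d))
    (x : EuclideanSpace ℝ (Fin d)) : ℝ :=
  ∑ i, fderiv ℝ (fun y => u y i) x (EuclideanSpace.single i 1)

/-- Laplacian of a scalar field on `ℝ^d`, as the divergence of its gradient. -/
noncomputable def lap {d : ℕ} (f : EuclideanSpace ℝ (Fin d) → ℝ)
    (x : EuclideanSpace ℝ (Fin d)) : ℝ :=
  vecDiv (fun y => gradient f y) x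

lemma gradient_apply' {d : ℕ} (f : EuclideanSpace ℝ (Fin d) → ℝ)
    (x : EuclideanSpace ℝ (Fin d)) (i : Fin d) :
    gradient f x i = fderiv ℝ f x (EuclideanSpace.single i 1) := by
  have h := InnerProductSpace.toDual_symm_apply (𝕜 := ℝ)
    (y := fderiv ℝ f x) (x := EuclideanSpace.single i 1)
  rw [gradient, ← h, PiLp.inner_apply]
  simp [EuclideanSpace.single_apply]

lemma vecDiv_sub' {d : ℕ} (A B : EuclideanSpace ℝ (Fin d) → EuclideanSpace ℝ (Fin d))
    (x : EuclideanSpace ℝ (Fin d))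
    (hA : ∀ i, DifferentiableAt ℝ (fun y => A y i) x)
    (hB : ∀ i, DifferentiableAt ℝ (fun y => B y i) x) :
    vecDiv (fun y => A y - B y) x = vecDiv A x - vecDiv B x := by
  unfold vecDiv
  rw [← Finset.sum_sub_distrib]
  refine Finset.sum_congr rfl fun i _ => ?_
  have h : (fun y => (A y - B y) i) = fun y => A y i - B y i := rfl
  rw [h, fderiv_fun_sub (hA i) (hB i)]
  simp

lemma vecDiv_smulVec {d : ℕ} (f : EuclideanSpace ℝ (Fin d) → ℝ)
    (u : EuclideanSpace ℝ (Fin d) → EuclideanSpace ℝ (Fin d)) (x : EuclideanSpace ℝ (Fin d))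
    (hf : DifferentiableAt ℝ f x) (hu : ∀ i, DifferentiableAt ℝ (fun y => u y i) x) :
    vecDiv (fun y => f y • u y) x =
      (∑ i, fderiv ℝ f x (EuclideanSpace.single i 1) * u x i) + f x * vecDiv u x := by
  unfold vecDiv
  rw [Finset.mul_sum, ← Finset.sum_add_distrib]
  refine Finset.sum_congr rfl fun i _ => ?_
  have h : (fun y => (f y • u y) i) = fun y => f y * u y i := rfl
  rw [h, fderiv_fun_mul hf (hu i)]
  simp [mul_comm]
  ring

/-- The pointwise divergence-form rewriting of the drift–diffusion–transport operator:
`div(φ(c)∇(n/φ(c)) − (n/φ(c))φ(c)u) = Δn − div(nχ(c)∇c) − u·∇n`,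
valid when `φ′ = φχ` and `div u = 0`. -/
theorem divergence_form_rewriting
    (d : ℕ) (hd : 1 ≤ d)
    (n c : EuclideanSpace ℝ (Fin d) → ℝ) (hn : ContDiff ℝ (⊤ : ℕ∞) n) (hc : ContDiff ℝ (⊤ : ℕ∞) c)
    (u : EuclideanSpace ℝ (Fin d) → EuclideanSpace ℝ (Fin d)) (hu : ContDiff ℝ (⊤ : ℕ∞) u)
    (hdivu : ∀ x, vecDiv u x = 0)
    (χ φ : ℝ → ℝ) (hχ : ContDiff ℝ (⊤ : ℕ∞) χ) (hφ : ContDiff ℝ (⊤ : ℕ∞) φ)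
    (hφpos : ∀ s, 0 < φ s) (hφ' : ∀ s, deriv φ s = φ s * χ s) :
    ∀ x, vecDiv (fun y => φ (c y) • gradient (fun z => n z / φ (c z)) y -
          (n y / φ (c y)) • (φ (c y) • u y)) x =
        lap n x - vecDiv (fun y => (n y * χ (c y)) • gradient c y) x -
          ⟪u x, gradient n x⟫ := by
  intro x
  have hnd : Differentiable ℝ n := hn.differentiable (by simp)
  have hcd : Differentiable ℝ c := hc.differentiable (by simp)
  -- Step 1: pointwise rewriting of the vector field
  have key : (fun y => φ (c y) • gradient (fun z => n z / φ (c z)) y -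
          (n y / φ (c y)) • (φ (c y) • u y)) =
      fun y => (gradient n y - (n y * χ (c y)) • gradient c y) - n y • u y := by
    funext y
    -- derivative of z ↦ φ (c z)
    have hcy : HasFDerivAt c (fderiv ℝ c y) y := (hcd y).hasFDerivAt
    have hφy : HasDerivAt φ (φ (c y) * χ (c y)) (c y) := by
      have := ((hφ.differentiable (by simp)) (c y)).hasDerivAt
      rwa [hφ' (c y)] at this
    have hφc : HasFDerivAt (fun z => φ (c z))
        ((φ (c y) * χ (c y)) • fderiv ℝ c y) y := hφy.comp_hasFDerivAt y hcy
    have hinv : HasFDerivAt (fun z => (φ (c z))⁻¹)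
        ((-(φ (c y) ^ 2)⁻¹) • ((φ (c y) * χ (c y)) • fderiv ℝ c y)) y := by
      exact (hasDerivAt_inv (ne_of_gt (hφpos (c y)))).comp_hasFDerivAt y hφc
    have hq : HasFDerivAt (fun z => n z / φ (c z))
        (n y • ((-(φ (c y) ^ 2)⁻¹) • ((φ (c y) * χ (c y)) • fderiv ℝ c y)) +
          (φ (c y))⁻¹ • fderiv ℝ n y) y := by
      have h1 : (fun z => n z / φ (c z)) = fun z => n z * (φ (c z))⁻¹ := by
        funext z; rw [div_eq_mul_inv]
      rw [h1]
      exact (hnd y).hasFDerivAt.mul hinv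
    ext i
    have hL : (φ (c y) • gradient (fun z => n z / φ (c z)) y -
        (n y / φ (c y)) • (φ (c y) • u y)) i =
        φ (c y) * gradient (fun z => n z / φ (c z)) y i -
          (n y / φ (c y)) * (φ (c y) * u y i) := rfl
    have hR : ((gradient n y - (n y * χ (c y)) • gradient c y) - n y • u y) i =
        (gradient n y i - (n y * χ (c y)) * gradient c y i) - n y * u y i := rfl
    rw [hL, hR, gradient_apply', gradient_apply', gradient_apply', hq.fderiv]
    have hp : φ (c y) ≠ 0 := ne_of_gt (hφpos (c y))
    simp only [ContinuousLinearMap.add_apply, ContinuousLinearMap.smul_apply, smul_eq_mul]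
    field_simp
    ring
  rw [key]
  -- differentiability of components
  have hgradn : ∀ i, DifferentiableAt ℝ (fun y => gradient n y i) x := by
    intro i
    have h1 : (fun y => gradient n y i) =
        fun y => fderiv ℝ n y (EuclideanSpace.single i 1) := by
      funext y; exact gradient_apply' n y i
    rw [h1]
    exact (((hn.fderiv_right (m := 1) (by exact WithTop.coe_le_coe.mpr le_top)).clm_apply contDiff_const).differentiable
      one_ne_zero).differentiableAt
  have hgradc : ∀ i, DifferentiableAt ℝ (fun y => gradient c y i) x := by
    intro i
    have h1 : (fun y => gradient c y i) =
        fun y => fderiv ℝ c y (EuclideanSpace.single i 1) := by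
      funext y; exact gradient_apply' c y i
    rw [h1]
    exact (((hc.fderiv_right (m := 1) (by exact WithTop.coe_le_coe.mpr le_top)).clm_apply contDiff_const).differentiable
      one_ne_zero).differentiableAt
  have hui : ∀ i, DifferentiableAt ℝ (fun y => u y i) x := fun i =>
    ((EuclideanSpace.proj (𝕜 := ℝ) i).differentiable.comp
      (hu.differentiable (by simp))).differentiableAt
  have hB : ∀ i, DifferentiableAt ℝ
      (fun y => ((n y * χ (c y)) • gradient c y) i) x := by
    intro i
    have h1 : (fun y => ((n y * χ (c y)) • gradient c y) i) =
        fun y => (n y * χ (c y)) * gradient c y i := rfl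
    rw [h1]
    have hχc : DifferentiableAt ℝ (fun y => χ (c y)) x :=
      DifferentiableAt.comp x (hχ.differentiable (by simp) (c x)) (hcd x)
    exact ((hnd x).mul hχc).mul (hgradc i)
  have hnu : ∀ i, DifferentiableAt ℝ (fun y => (n y • u y) i) x := by
    intro i
    have h1 : (fun y => (n y • u y) i) = fun y => n y * u y i := rfl
    rw [h1]
    exact (hnd x).mul (hui i)
  have e1 := vecDiv_sub' (fun y => gradient n y - (n y * χ (c y)) • gradient c y)
    (fun y => n y • u y) x (fun i => (hgradn i).sub (hB i)) hnu
  have e2 := vecDiv_sub' (fun y => gradient n y) (fun y => (n y * χ (c y)) • gradient c y)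
    x hgradn hB
  have e3 := vecDiv_smulVec n u x (hnd x) hui
  rw [e1, e2, e3, hdivu x]
  have hinner : ⟪u x, gradient n x⟫ =
      ∑ i, fderiv ℝ n x (EuclideanSpace.single i 1) * u x i := by
    rw [PiLp.inner_apply]
    refine Finset.sum_congr rfl fun i _ => ?_
    rw [gradient_apply']
    simp [mul_comm]
  rw [hinner]
  have hlap : vecDiv (fun y => gradient n y) x = lap n x := rfl
  rw [hlap]
  ring
end
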